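/- Let x₀, P, Q be probability distributions on a finite set with x₀ absolutely continuous with respect to both P and Q. Then TV(P,Q)² ≤ CE(P, x₀) + CE(Q, x₀), where CE(P, x₀) = −∑ₓ x₀(x) log P(x) denotes the cross entropy of P relative to the target x₀. -/

import Mathlib

open Finset

/-- Total variation distance between two pmfs on a finite type. -/
noncomputable def tvDist {α : Type*} [Fintype α] (P Q : α → ℝ) : ℝ :=
  (1/2) * ∑ x, |P x - Q x|

/-- Cross entropy of `P` relative to the target `x₀`: CE(P, x₀) = −∑ₓ x₀(x)·log P(x). -/
noncomputable def crossEntropy {α : Type*} [Fintype α] (P x₀ : α → ℝ) : ℝ :=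
  -∑ x, x₀ x * Real.log (P x)

noncomputable def pinF (t : ℝ) : ℝ :=
  t * Real.log t - t + 1 - 3 * (t - 1) ^ 2 / (2 * (t + 2))

noncomputable def pinL (t : ℝ) : ℝ :=
  Real.log t - 3 * (t - 1) * (t + 5) / (2 * (t + 2) ^ 2)

lemma pinF_hasDeriv {t : ℝ} (ht : 0 < t) : HasDerivAt pinF (pinL t) t := by
  have h2 : (2 : ℝ) * (t + 2) ≠ 0 := by positivity
  have h1 : HasDerivAt (fun t : ℝ => t * Real.log t) (Real.log t + 1) t :=
    Real.hasDerivAt_mul_log ht.ne'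
  have hu : HasDerivAt (fun t : ℝ => 3 * (t - 1) ^ 2) (6 * (t - 1)) t := by
    have := ((hasDerivAt_id t).sub_const 1).pow 2
    have := this.const_mul (3 : ℝ)
    refine this.congr_deriv ?_
    simp [id]
    ring
  have hv : HasDerivAt (fun t : ℝ => 2 * (t + 2)) 2 t := by
    simpa using ((hasDerivAt_id t).add_const 2).const_mul (2 : ℝ)
  have hq := hu.div hv h2
  have h := (h1.sub (hasDerivAt_id t)).add_const 1 |>.sub hq
  refine h.congr_deriv ?_
  unfold pinL
  field_simp
  ring

lemma pinL_hasDeriv {t : ℝ} (ht : 0 < t) :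
    HasDerivAt pinL (1 / t - 27 / (t + 2) ^ 3) t := by
  have h2 : (2 : ℝ) * (t + 2) ^ 2 ≠ 0 := by positivity
  have hlog : HasDerivAt Real.log (1 / t) t := by
    simpa [one_div] using Real.hasDerivAt_log ht.ne'
  have hu : HasDerivAt (fun t : ℝ => 3 * (t - 1) * (t + 5)) (6 * (t + 2)) t := by
    have := (((hasDerivAt_id t).sub_const 1).const_mul (3 : ℝ)).mul
      ((hasDerivAt_id t).add_const 5)
    refine this.congr_deriv ?_
    simp [id]
    ring
  have hv : HasDerivAt (fun t : ℝ => 2 * (t + 2) ^ 2) (2 * (2 * (t + 2))) t := by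
    have := (((hasDerivAt_id t).add_const 2).pow 2).const_mul (2 : ℝ)
    refine this.congr_deriv ?_
    simp [id]
  have hq := hu.div hv h2
  have h := hlog.sub hq
  refine h.congr_deriv ?_
  have h3 : (t + 2) ≠ 0 := by positivity
  field_simp
  ring

lemma pinL_mono : MonotoneOn pinL (Set.Ioi (0 : ℝ)) := by
  apply monotoneOn_of_hasDerivWithinAt_nonneg (convex_Ioi 0)
    (f' := fun t => 1 / t - 27 / (t + 2) ^ 3)
  · intro t ht
    exact (pinL_hasDeriv ht).continuousAt.continuousWithinAt
  · intro t ht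
    rw [interior_Ioi] at ht
    exact (pinL_hasDeriv ht).hasDerivWithinAt
  · intro t ht
    rw [interior_Ioi] at ht
    have ht : (0 : ℝ) < t := ht
    have h3 : (0 : ℝ) < (t + 2) ^ 3 := by positivity
    rw [sub_nonneg, div_le_div_iff₀ h3 ht]
    nlinarith [sq_nonneg (t - 1), ht.le]

lemma pinL_one : pinL 1 = 0 := by
  simp [pinL, Real.log_one]

lemma pinF_one : pinF 1 = 0 := by
  simp [pinF, Real.log_one]

lemma pinF_nonneg {t : ℝ} (ht : 0 < t) : 0 ≤ pinF t := by
  rcases le_total t 1 with h | h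
  · have hanti : AntitoneOn pinF (Set.Ioc (0 : ℝ) 1) := by
      apply antitoneOn_of_hasDerivWithinAt_nonpos (convex_Ioc 0 1) (f' := pinL)
      · intro s hs
        exact (pinF_hasDeriv hs.1).continuousAt.continuousWithinAt
      · intro s hs
        rw [interior_Ioc] at hs
        exact (pinF_hasDeriv hs.1).hasDerivWithinAt
      · intro s hs
        rw [interior_Ioc] at hs
        have := pinL_mono (Set.mem_Ioi.2 hs.1) (Set.mem_Ioi.2 one_pos) hs.2.le
        rw [pinL_one] at this
        exact this
    have := hanti ⟨ht, h⟩ ⟨one_pos, le_refl 1⟩ h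
    rwa [pinF_one] at this
  · have hmono : MonotoneOn pinF (Set.Ici (1 : ℝ)) := by
      apply monotoneOn_of_hasDerivWithinAt_nonneg (convex_Ici 1) (f' := pinL)
      · intro s hs
        have : (0:ℝ) < s := lt_of_lt_of_le one_pos hs
        exact (pinF_hasDeriv this).continuousAt.continuousWithinAt
      · intro s hs
        rw [interior_Ici] at hs
        exact (pinF_hasDeriv (lt_trans one_pos hs)).hasDerivWithinAt
      · intro s hs
        rw [interior_Ici] at hs
        have := pinL_mono (Set.mem_Ioi.2 one_pos) (Set.mem_Ioi.2 (lt_trans one_pos hs)) hs.le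
        rw [pinL_one] at this
        exact this
    have := hmono (Set.mem_Ici.2 (le_refl 1)) (Set.mem_Ici.2 h) h
    rwa [pinF_one] at this

/-- pointwise bound: for q > 0, p ≥ 0 -/
lemma pointwise_bound {p q : ℝ} (hp : 0 ≤ p) (hq : 0 < q) :
    3 * (p - q) ^ 2 / (2 * (p + 2 * q)) ≤ p * Real.log (p / q) - p + q := by
  rcases hp.eq_or_lt with h | h
  · rw [← h]
    simp only [zero_sub, zero_add, zero_mul, zero_sub, neg_sq]
    rw [div_le_iff₀ (by positivity)]
    nlinarith [hq]
  · have hf := pinF_nonneg (div_pos h hq)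
    have hkey : p * Real.log (p / q) - p + q - 3 * (p - q) ^ 2 / (2 * (p + 2 * q))
        = q * pinF (p / q) := by
      unfold pinF
      have h1 : p + 2 * q ≠ 0 := by positivity
      have h2 : p / q + 2 ≠ 0 := by positivity
      field_simp
    nlinarith [mul_nonneg hq.le hf]

theorem tv_sq_le_crossEntropy_add_crossEntropy' {α : Type*} [Fintype α]
    (x₀ P : α → ℝ)
    (hx0 : ∀ x, 0 ≤ x₀ x) (hx1 : ∑ x, x₀ x = 1)
    (hP0 : ∀ x, 0 ≤ P x) (hP1 : ∑ x, P x = 1)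
    (hacP : ∀ x, P x = 0 → x₀ x = 0) :
    (∑ x, |x₀ x - P x|) ^ 2 ≤ 2 * (-∑ x, x₀ x * Real.log (P x)) := by
  set b : α → ℝ := fun x => 3 * (x₀ x - P x) ^ 2 / (2 * (x₀ x + 2 * P x)) with hb
  -- Cauchy-Schwarz
  have hcs : (∑ x, |x₀ x - P x|) ^ 2 ≤ (∑ x, 2 * (x₀ x + 2 * P x) / 3) * ∑ x, b x := by
    apply Finset.sum_sq_le_sum_mul_sum_of_sq_eq_mul
    · intro i _; have := hx0 i; have := hP0 i; positivity
    · intro i _; have := hx0 i; have := hP0 i; positivity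
    · intro i _
      rcases eq_or_lt_of_le (by have := hx0 i; have := hP0 i; linarith : (0:ℝ) ≤ x₀ i + 2 * P i) with h | h
      · have h1 : x₀ i = 0 := by nlinarith [hx0 i, hP0 i]
        have h2 : P i = 0 := by nlinarith [hx0 i, hP0 i]
        simp [hb, h1, h2]
      · rw [sq_abs, hb]
        have : x₀ i + P i * 2 ≠ 0 := by linarith
        field_simp
  have hsum : (∑ x, 2 * (x₀ x + 2 * P x) / 3) = 2 := by
    rw [← Finset.sum_div, ← Finset.mul_sum]
    rw [Finset.sum_add_distrib, hx1, ← Finset.mul_sum, hP1]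
    norm_num
  rw [hsum] at hcs
  refine hcs.trans ?_
  have hbound : ∑ x, b x ≤ -∑ x, x₀ x * Real.log (P x) := by
    have step1 : ∑ x, b x ≤ ∑ x, (x₀ x * Real.log (x₀ x / P x) - x₀ x + P x) := by
      apply Finset.sum_le_sum
      intro i _
      rcases (hP0 i).eq_or_lt with hPi | hPi
      · have h1 : x₀ i = 0 := hacP i hPi.symm
        simp [hb, h1, ← hPi]
      · exact pointwise_bound (hx0 i) hPi
    have step2 : ∑ x, (x₀ x * Real.log (x₀ x / P x) - x₀ x + P x)
        = ∑ x, x₀ x * Real.log (x₀ x / P x) := by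
      rw [Finset.sum_add_distrib, Finset.sum_sub_distrib, hx1, hP1]
      ring
    have step3 : ∑ x, x₀ x * Real.log (x₀ x / P x) ≤ ∑ x, -(x₀ x * Real.log (P x)) := by
      apply Finset.sum_le_sum
      intro i _
      rcases (hx0 i).eq_or_lt with hxi | hxi
      · simp [← hxi]
      · have hPi : 0 < P i := by
          rcases (hP0 i).eq_or_lt with h | h
          · exact absurd (hacP i h.symm) (ne_of_gt hxi)
          · exact h
        rw [Real.log_div (ne_of_gt hxi) (ne_of_gt hPi), mul_sub]
        have hx1i : x₀ i ≤ 1 := by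
          calc x₀ i ≤ ∑ x, x₀ x := Finset.single_le_sum (fun x _ => hx0 x) (Finset.mem_univ i)
          _ = 1 := hx1
        have : x₀ i * Real.log (x₀ i) ≤ 0 :=
          mul_nonpos_of_nonneg_of_nonpos (hx0 i) (Real.log_nonpos (hx0 i) hx1i)
        linarith
    have step4 : ∑ x, -(x₀ x * Real.log (P x)) = -∑ x, x₀ x * Real.log (P x) :=
      Finset.sum_neg_distrib _
    linarith
  linarith

/-- Proposition 1 (semi-triangle inequality):
TV(P,Q)² ≤ CE(P, x₀) + CE(Q, x₀). -/
theorem tv_sq_le_crossEntropy_add_crossEntropy {α : Type*} [Fintype α]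
    (x₀ P Q : α → ℝ)
    (hx0 : ∀ x, 0 ≤ x₀ x) (hx1 : ∑ x, x₀ x = 1)
    (hP0 : ∀ x, 0 ≤ P x) (hP1 : ∑ x, P x = 1)
    (hQ0 : ∀ x, 0 ≤ Q x) (hQ1 : ∑ x, Q x = 1)
    (hacP : ∀ x, P x = 0 → x₀ x = 0)
    (hacQ : ∀ x, Q x = 0 → x₀ x = 0) :
    (tvDist P Q) ^ 2 ≤ crossEntropy P x₀ + crossEntropy Q x₀ := by
  have h1 := tv_sq_le_crossEntropy_add_crossEntropy' x₀ P hx0 hx1 hP0 hP1 hacP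
  have h2 := tv_sq_le_crossEntropy_add_crossEntropy' x₀ Q hx0 hx1 hQ0 hQ1 hacQ
  have htri : ∑ x, |P x - Q x| ≤ (∑ x, |x₀ x - P x|) + ∑ x, |x₀ x - Q x| := by
    rw [← Finset.sum_add_distrib]
    apply Finset.sum_le_sum
    intro i _
    calc |P i - Q i| ≤ |P i - x₀ i| + |x₀ i - Q i| := abs_sub_le _ _ _
    _ = |x₀ i - P i| + |x₀ i - Q i| := by rw [abs_sub_comm]
  have hnn : 0 ≤ ∑ x, |P x - Q x| := Finset.sum_nonneg fun i _ => abs_nonneg _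
  rw [tvDist]
  unfold crossEntropy
  nlinarith [sq_nonneg ((∑ x, |x₀ x - P x|) - ∑ x, |x₀ x - Q x|)]
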